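/- arXiv:1307.0282 — 6 statements merged into one kernel-verified Lean document; each statement's English description precedes it below -/
import Mathlib

section
/- If ord_{p^i}(a) = d with d even, and ord_{p^(i+1)}(a) = p·d, then for every r with 1 ≤ r ≤ m there exists an integer t with a^t ≡ -1 (mod p^r). -/
/-!
The order `e` of `a` modulo `p ^ r` is a multiple of its order `d` modulo `p`, hence even, so
`a ^ (e / 2)` has order `2`. Since `ZMod (p ^ r)` is a local ring in which `2 = (x + 1) + (1 - x)`
is a unit, one of `x + 1`, `1 - x` is a unit, so the only square roots of `1` are `±1`; therefore
`a ^ (e / 2) = -1`.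
-/

theorem IsLocalRing.eq_one_or_eq_neg_one_of_sq_eq_one {R : Type*} [CommRing R] [IsLocalRing R]
    (h2 : IsUnit (2 : R)) {x : R} (hx : x ^ 2 = 1) : x = 1 ∨ x = -1 := by
  have hprod : (x + 1) * (x - 1) = 0 := by linear_combination hx
  have hsum : (x + 1) + (1 - x) = 2 := by ring
  rcases isUnit_or_isUnit_of_isUnit_add (hsum ▸ h2) with hplus | hminus
  · exact .inl (sub_eq_zero.mp (hplus.mul_right_eq_zero.mp hprod))
  · refine .inr (eq_neg_of_add_eq_zero_left ?_)
    exact hminus.mul_right_eq_zero.mp (by linear_combination -hprod)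

theorem IsLocalRing.pow_orderOf_div_two_eq_neg_one {R : Type*} [CommRing R] [IsLocalRing R]
    (h2 : IsUnit (2 : R)) {x : R} (hx : orderOf x ≠ 0) (heven : Even (orderOf x)) :
    x ^ (orderOf x / 2) = -1 := by
  have hord : orderOf (x ^ (orderOf x / 2)) = 2 := orderOf_pow_orderOf_div hx heven.two_dvd
  obtain ⟨hsq, hne⟩ := orderOf_eq_prime_iff.mp hord
  exact (eq_one_or_eq_neg_one_of_sq_eq_one h2 hsq).resolve_left hne

theorem ZMod.isLocalRing_prime_pow {p : ℕ} (hp : p.Prime) {r : ℕ} (hr : r ≠ 0) :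
    IsLocalRing (ZMod (p ^ r)) :=
  have : Fact p.Prime := ⟨hp⟩
  have : Fact (1 < p ^ r) := ⟨Nat.one_lt_pow hr hp.one_lt⟩
  .of_surjective' (PadicInt.toZModPow r) (ZMod.ringHom_surjective _)

theorem ZMod.isUnit_two_prime_pow {p : ℕ} (hp : p.Prime) (hp2 : p ≠ 2) {r : ℕ} (hr : r ≠ 0) :
    IsUnit (2 : ZMod (p ^ r)) := by
  rw [← Nat.cast_ofNat, ZMod.isUnit_natCast_iff_not_dvd_pow hp (Nat.pos_of_ne_zero hr)]
  exact fun h ↦ hp2 ((Nat.prime_dvd_prime_iff_eq hp Nat.prime_two).mp h)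

theorem neg_one_is_power_mod_prime_pow_general (p : ℕ) (hp : p.Prime) (hpodd : Odd p)
    (i m : ℕ) (hi : 1 ≤ i) (a : ℤ) (ha : IsCoprime a (p : ℤ)) (d : ℕ)
    (hdeven : Even d)
    (hd : ∀ k, 1 ≤ k → k ≤ i → orderOf ((a : ZMod (p ^ k))) = d) :
    ∀ r, 1 ≤ r → r ≤ m → ∃ t : ℕ, (a : ZMod (p ^ r)) ^ t = -1 := by
  intro r hr _
  have hr0 : r ≠ 0 := Nat.one_le_iff_ne_zero.mp hr
  have := ZMod.isLocalRing_prime_pow hp hr0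
  have hunit : IsUnit (a : ZMod (p ^ r)) :=
    (ZMod.coe_int_isUnit_iff_isCoprime a _).mpr (by push_cast; exact ha.symm.pow_left)
  have hd_dvd : d ∣ orderOf (a : ZMod (p ^ r)) := by
    have hd1 : orderOf (a : ZMod p) = d := by rw [← hd 1 le_rfl hi, pow_one]
    rw [← hd1, ← map_intCast (ZMod.castHom (dvd_pow_self p hr0) (ZMod p)) a]
    exact orderOf_map_dvd _ _
  have heven : Even (orderOf (a : ZMod (p ^ r))) :=
    even_iff_two_dvd.mpr (hdeven.two_dvd.trans hd_dvd)
  have h2 := ZMod.isUnit_two_prime_pow hp (hpodd.ne_two_of_dvd_nat dvd_rfl) hr0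
  exact ⟨_, IsLocalRing.pow_orderOf_div_two_eq_neg_one h2
    hunit.isOfFinOrder.orderOf_pos.ne' heven⟩

/-- If `ord_{p^k}(a) = d` for `1 ≤ k ≤ i` with `d` even, and `ord_{p^(i+1)}(a) = p*d`,
then for every `1 ≤ r ≤ m` there exists `t` with `a^t ≡ -1 (mod p^r)`. -/
theorem neg_one_is_power_mod_prime_pow (p : ℕ) (hp : p.Prime) (hpodd : Odd p)
    (i m : ℕ) (hi : 1 ≤ i) (hm : 1 ≤ m) (a : ℤ) (ha : IsCoprime a (p : ℤ)) (d : ℕ)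
    (hdeven : Even d)
    (hd : ∀ k, 1 ≤ k → k ≤ i → orderOf ((a : ZMod (p ^ k))) = d)
    (hd' : orderOf ((a : ZMod (p ^ (i + 1)))) = p * d) :
    ∀ r, 1 ≤ r → r ≤ m → ∃ t : ℕ, (a : ZMod (p ^ r)) ^ t = -1 :=
  neg_one_is_power_mod_prime_pow_general p hp hpodd i m hi a ha d hdeven hd
end

section
/- Let ζ be a primitive p^m-th root of unity over the finite field F with 2^n elements, and let j = k·p^r with gcd(k,p)=1. Then ζ^j and ζ^{-j} are roots of the same irreducible polynomial over F if and only if there exists t with (2^n)^t ≡ -1 (mod p^{m-r}). -/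
/-!
Over a finite field `F` with `q` elements, the conjugates of an algebraic element `x` are exactly
the powers `x ^ q ^ t`: `x` and a conjugate `y` lie in the finite field `F⟮x, y⟯`, whose Galois group over `F` is
generated by the Frobenius `z ↦ z ^ q`. Now `α = ζ ^ j` is a primitive `p ^ (m - r)`-th root of
unity, and `α⁻¹ = α ^ e` exactly when `e ≡ -1 [MOD p ^ (m - r)]`.
-/

open IntermediateField

namespace FiniteField

variable {F K : Type*} [Field F] [Fintype F] [Field K] [Algebra F K]

theorem isConjRoot_pow_card_pow (x : K) (t : ℕ) : IsConjRoot F x (x ^ Fintype.card F ^ t) := by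
  have h := minpoly.algHom_eq (frobeniusAlgHom F K ^ t) (RingHom.injective _) x
  rw [AlgHom.coe_pow, coe_frobeniusAlgHom, pow_iterate] at h
  exact h.symm

theorem _root_.IsConjRoot.exists_eq_pow_card_pow {x y : K} (hx : IsIntegral F x)
    (h : IsConjRoot F x y) : ∃ t : ℕ, y = x ^ Fintype.card F ^ t := by
  let E := F⟮x, y⟯
  have : FiniteDimensional F E := finiteDimensional_adjoin <| by
    rintro z (rfl | rfl | -)
    exacts [hx, h.isIntegral hx]
  have : Finite E := Module.finite_of_finite F
  let x' : E := ⟨x, subset_adjoin F _ (by simp)⟩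
  let y' : E := ⟨y, subset_adjoin F _ (by simp)⟩
  obtain ⟨σ, hσ⟩ := ((isConjRoot_algHom_iff E.val).mp h.symm : IsConjRoot F y' x').exists_algEquiv
  obtain ⟨t, rfl⟩ := (bijective_frobeniusAlgEquivOfAlgebraic_pow F E).2 σ
  refine ⟨t, ?_⟩
  rw [AlgEquiv.coe_pow, coe_frobeniusAlgEquivOfAlgebraic_iterate] at hσ
  exact congrArg Subtype.val hσ.symm

theorem isConjRoot_iff_exists_eq_pow_card_pow {x y : K} (hx : IsIntegral F x) :
    IsConjRoot F x y ↔ ∃ t : ℕ, y = x ^ Fintype.card F ^ t :=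
  ⟨(·.exists_eq_pow_card_pow hx), fun ⟨t, ht⟩ => ht ▸ isConjRoot_pow_card_pow x t⟩

end FiniteField

theorem IsPrimitiveRoot.inv_eq_pow_iff {M : Type*} [CommGroupWithZero M] {α : M} {N : ℕ}
    [NeZero N] (h : IsPrimitiveRoot α N) (e : ℕ) : α⁻¹ = α ^ e ↔ (e : ZMod N) = -1 := by
  rw [eq_comm, ← mul_eq_one_iff_eq_inv₀ (h.ne_zero (NeZero.ne N)), ← pow_succ,
    h.pow_eq_one_iff_dvd, ← ZMod.natCast_eq_zero_iff, Nat.cast_succ, add_eq_zero_iff_eq_neg]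

theorem same_irreducible_factor_iff_general (p n m : ℕ) (hp : p.Prime)
    (F K : Type*) [Field F] [Fintype F] [Field K] [Algebra F K]
    (hF : Fintype.card F = 2 ^ n)
    (ζ : K) (hζ : IsPrimitiveRoot ζ (p ^ m))
    (j k r : ℕ) (hr : r ≤ m) (hj : j = k * p ^ r) (hk : Nat.Coprime k p) :
    minpoly F (ζ ^ j) = minpoly F (ζ ^ j)⁻¹ ↔
      ∃ t : ℕ, ((2 ^ n : ZMod (p ^ (m - r))) : ZMod (p ^ (m - r))) ^ t = -1 := by
  have : NeZero (p ^ (m - r)) := ⟨pow_ne_zero _ hp.ne_zero⟩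
  have hα : IsPrimitiveRoot (ζ ^ j) (p ^ (m - r)) := by
    rw [hj, pow_mul]
    exact (hζ.pow_of_coprime k (hk.pow_right m)).pow (pow_pos hp.pos m)
      (by rw [← pow_add, Nat.add_sub_cancel' hr])
  have hα_int : IsIntegral F (ζ ^ j) := (hα.isIntegral (pow_pos hp.pos _)).tower_top
  rw [← isConjRoot_def, FiniteField.isConjRoot_iff_exists_eq_pow_card_pow hα_int, hF]
  simp_rw [hα.inv_eq_pow_iff, Nat.cast_pow, Nat.cast_ofNat]

/-- Let `ζ` be a primitive `p^m`-th root of unity over the finite field `F` of order `2^n`,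
and `j = k * p^r` with `gcd(k, p) = 1`. Then `ζ^j` and `ζ^{-j}` are roots of the same
irreducible polynomial over `F` (i.e. have the same minimal polynomial) iff there exists
`t` with `(2^n)^t ≡ -1 (mod p^(m-r))`. -/
theorem same_irreducible_factor_iff (p n m : ℕ) (hp : p.Prime) (hpodd : Odd p)
    (hn : 1 ≤ n) (hm : 1 ≤ m)
    (F K : Type*) [Field F] [Fintype F] [Field K] [Algebra F K]
    (hF : Fintype.card F = 2 ^ n)
    (ζ : K) (hζ : IsPrimitiveRoot ζ (p ^ m))
    (j k r : ℕ) (hr : r ≤ m) (hj : j = k * p ^ r) (hk : Nat.Coprime k p) :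
    minpoly F (ζ ^ j) = minpoly F (ζ ^ j)⁻¹ ↔
      ∃ t : ℕ, ((2 ^ n : ZMod (p ^ (m - r))) : ZMod (p ^ (m - r))) ^ t = -1 :=
  same_irreducible_factor_iff_general p n m hp F K hF ζ hζ j k r hr hj hk
end

section
/- Let ζ be a primitive p^s-th root of unity over the finite field F of order q = 2^n, and let o = ord_{p^s}(q). If there exists t with q^t ≡ -1 (mod p^s), then [F(ζ + ζ^{-1}) : F] = o/2; otherwise [F(ζ + ζ^{-1}) : F] = o and F(ζ + ζ^{-1}) = F(ζ). -/
/-!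
The Frobenius `x ↦ x ^ q` generates the Galois group of every finite extension of `F`, so the
degree of an algebraic `x` over `F` is its period under Frobenius: `[F(x) : F] ∣ j` iff
`x ^ q ^ j = x`. For `x = ζ` this means `q ^ j ≡ 1 (mod p ^ s)`. Since
`(ζ + ζ⁻¹) ^ q ^ j = ζ ^ q ^ j + ζ ^ (-q ^ j)`, for `x = ζ + ζ⁻¹` it means `q ^ j ≡ ±1`, and as
`±1` are the only square roots of `1` modulo an odd prime power, this is `q ^ (2 j) ≡ 1`.
-/

open IntermediateField

theorem add_inv_eq_add_inv_iff {K : Type*} [Field K] {u v : K} (hu : u ≠ 0) (hv : v ≠ 0) :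
    u + u⁻¹ = v + v⁻¹ ↔ u = v ∨ u = v⁻¹ := by
  refine ⟨fun h ↦ ?_, by rintro (rfl | rfl) <;> simp [add_comm]⟩
  have hfactor : (u - v) * (u * v - 1) = 0 := by
    field_simp at h
    linear_combination h
  rcases mul_eq_zero.mp hfactor with huv | huv
  · exact .inl (sub_eq_zero.mp huv)
  · exact .inr (eq_inv_of_mul_eq_one_left (sub_eq_zero.mp huv))

namespace IsPrimitiveRoot

variable {K : Type*} [Field K] {ζ : K} {N : ℕ} [NeZero N]

theorem pow_eq_self_iff (hζ : IsPrimitiveRoot ζ N) (a : ℕ) : ζ ^ a = ζ ↔ (a : ZMod N) = 1 := by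
  have hfin : IsOfFinOrder ζ := isOfFinOrder_iff_pow_eq_one.mpr ⟨N, NeZero.pos N, hζ.pow_eq_one⟩
  nth_rw 2 [← pow_one ζ]
  rw [hfin.pow_eq_pow_iff_modEq, ← hζ.eq_orderOf, ← ZMod.natCast_eq_natCast_iff, Nat.cast_one]

theorem pow_eq_inv_iff (hζ : IsPrimitiveRoot ζ N) (a : ℕ) : ζ ^ a = ζ⁻¹ ↔ (a : ZMod N) = -1 := by
  rw [← mul_eq_one_iff_eq_inv₀ (hζ.ne_zero (NeZero.ne N)), ← pow_succ, hζ.pow_eq_one_iff_dvd,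
    ← ZMod.natCast_eq_zero_iff, Nat.cast_succ, add_eq_zero_iff_eq_neg]

end IsPrimitiveRoot

theorem ZMod.eq_one_or_eq_neg_one_of_sq_eq_one {p s : ℕ} (hp : p.Prime) (hpodd : Odd p)
    {x : ZMod (p ^ s)} (hx : x ^ 2 = 1) : x = 1 ∨ x = -1 := by
  obtain ⟨a, rfl⟩ := ZMod.intCast_surjective x
  have hpZ : Prime (p : ℤ) := Nat.prime_iff_prime_int.mp hp
  have hcast : ∀ b : ℤ, (p : ℤ) ^ s ∣ b ↔ (b : ZMod (p ^ s)) = 0 := fun b ↦ by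
    rw [ZMod.intCast_zmod_eq_zero_iff_dvd, Nat.cast_pow]
  have hprod : (p : ℤ) ^ s ∣ (a + 1) * (a - 1) := by
    rw [hcast]
    push_cast
    linear_combination hx
  have hnot : ¬ ((p : ℤ) ∣ a + 1 ∧ (p : ℤ) ∣ a - 1) := fun ⟨h₁, h₂⟩ ↦ by
    have : p ∣ 2 := Int.natCast_dvd_natCast.mp (by simpa using dvd_sub h₁ h₂)
    rw [(Nat.prime_dvd_prime_iff_eq hp Nat.prime_two).mp this] at hpodd
    exact absurd hpodd (by decide)
  rcases not_and_or.mp hnot with h | h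
  · have := (hcast _).mp (hpZ.pow_dvd_of_dvd_mul_left s h hprod)
    push_cast at this
    exact .inl (sub_eq_zero.mp this)
  · have := (hcast _).mp (hpZ.pow_dvd_of_dvd_mul_right s h hprod)
    push_cast at this
    exact .inr (eq_neg_of_add_eq_zero_left this)

theorem ZMod.pow_eq_one_or_eq_neg_one_iff {p s : ℕ} (hp : p.Prime) (hpodd : Odd p)
    (x : ZMod (p ^ s)) (j : ℕ) : x ^ j = 1 ∨ x ^ j = -1 ↔ (x ^ 2) ^ j = 1 := by
  rw [← pow_mul, mul_comm, pow_mul]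
  refine ⟨by rintro (h | h) <;> simp [h], eq_one_or_eq_neg_one_of_sq_eq_one hp hpodd⟩

namespace FiniteField

variable {F K : Type*} [Field F] [Fintype F] [Field K] [Algebra F K]

theorem frobeniusAlgHom_pow_apply (j : ℕ) (x : K) :
    (frobeniusAlgHom F K ^ j) x = x ^ Fintype.card F ^ j := by
  rw [AlgHom.coe_pow, coe_frobeniusAlgHom, pow_iterate]

theorem add_inv_pow_card_pow (x : K) (j : ℕ) :
    (x + x⁻¹) ^ Fintype.card F ^ j = x ^ Fintype.card F ^ j + (x ^ Fintype.card F ^ j)⁻¹ := by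
  simp only [← frobeniusAlgHom_pow_apply, map_add, map_inv₀]

theorem finrank_adjoin_simple_dvd_iff {x : K} (hx : IsIntegral F x) (j : ℕ) :
    Module.finrank F F⟮x⟯ ∣ j ↔ x ^ Fintype.card F ^ j = x := by
  have : FiniteDimensional F F⟮x⟯ := adjoin.finiteDimensional hx
  have : Finite F⟮x⟯ := Module.finite_of_finite F
  rw [← orderOf_frobeniusAlgHom F F⟮x⟯, orderOf_dvd_iff_pow_eq_one]
  constructor
  · intro h
    simpa [frobeniusAlgHom_pow_apply] using
      congrArg Subtype.val (AlgHom.congr_fun h (AdjoinSimple.gen F x))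
  · intro h
    refine adjoin_algHom_ext F fun y hy ↦ ?_
    rw [Set.mem_singleton_iff] at hy
    subst hy
    ext
    simpa [frobeniusAlgHom_pow_apply] using h

section PrimitiveRoot

variable {ζ : K} {N : ℕ} [NeZero N]

theorem finrank_adjoin_primitiveRoot (hζ : IsPrimitiveRoot ζ N) :
    Module.finrank F F⟮ζ⟯ = orderOf (Fintype.card F : ZMod N) :=
  Nat.dvd_right_iff_eq.mp fun j ↦ by
    rw [finrank_adjoin_simple_dvd_iff (hζ.isIntegral (NeZero.pos N)).tower_top,
      hζ.pow_eq_self_iff, Nat.cast_pow, orderOf_dvd_iff_pow_eq_one]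

theorem finrank_adjoin_add_inv_primitiveRoot_dvd_iff (hζ : IsPrimitiveRoot ζ N) (j : ℕ) :
    Module.finrank F F⟮ζ + ζ⁻¹⟯ ∣ j ↔
      (Fintype.card F : ZMod N) ^ j = 1 ∨ (Fintype.card F : ZMod N) ^ j = -1 := by
  have hζint : IsIntegral F ζ := (hζ.isIntegral (NeZero.pos N)).tower_top
  have hint : IsIntegral F (ζ + ζ⁻¹) := hζint.add hζint.inv
  have hζ0 : ζ ≠ 0 := hζ.ne_zero (NeZero.ne N)
  rw [finrank_adjoin_simple_dvd_iff hint, add_inv_pow_card_pow,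
    add_inv_eq_add_inv_iff (pow_ne_zero _ hζ0) hζ0, hζ.pow_eq_self_iff, hζ.pow_eq_inv_iff,
    Nat.cast_pow]

end PrimitiveRoot

end FiniteField

theorem degree_adjoin_zeta_add_zeta_inv_general (p s : ℕ) (hp : p.Prime) (hpodd : Odd p)
    (hs : 1 ≤ s)
    (F K : Type*) [Field F] [Fintype F] [Field K] [Algebra F K]
    (q : ℕ) (hF : Fintype.card F = q)
    (ζ : K) (hζ : IsPrimitiveRoot ζ (p ^ s))
    (o : ℕ) (ho : o = orderOf ((q : ZMod (p ^ s)))) :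
    ((∃ t : ℕ, (q : ZMod (p ^ s)) ^ t = -1) →
        Module.finrank F (IntermediateField.adjoin F {ζ + ζ⁻¹}) = o / 2) ∧
    ((¬ ∃ t : ℕ, (q : ZMod (p ^ s)) ^ t = -1) →
        Module.finrank F (IntermediateField.adjoin F {ζ + ζ⁻¹}) = o ∧
          IntermediateField.adjoin F {ζ + ζ⁻¹} = IntermediateField.adjoin F {ζ}) := by
  subst hF ho
  have : Fact (1 < p ^ s) := ⟨Nat.one_lt_pow (by omega) hp.one_lt⟩
  have hdvd := FiniteField.finrank_adjoin_add_inv_primitiveRoot_dvd_iff (F := F) hζ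
  set g : ZMod (p ^ s) := (Fintype.card F : ZMod (p ^ s))
  constructor
  · rintro ⟨t, ht⟩
    have hchar : ringChar (ZMod (p ^ s)) ≠ 2 := by
      rw [ZMod.ringChar_zmod_n]
      exact fun h ↦ Nat.not_even_iff_odd.mpr (hpodd.pow (n := s)) (h ▸ even_two)
    have h2 : 2 ∣ orderOf g := by
      simpa [hchar, ht] using orderOf_pow_dvd (x := g) t
    rw [← orderOf_pow_of_dvd two_ne_zero h2]
    exact Nat.dvd_right_iff_eq.mp fun j ↦ by
      rw [hdvd, ZMod.pow_eq_one_or_eq_neg_one_iff hp hpodd, orderOf_dvd_iff_pow_eq_one]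
  · intro hne
    have hd : Module.finrank F F⟮ζ + ζ⁻¹⟯ = orderOf g :=
      Nat.dvd_right_iff_eq.mp fun j ↦ by
        rw [hdvd, or_iff_left fun h ↦ hne ⟨j, h⟩, orderOf_dvd_iff_pow_eq_one]
    have hle : F⟮ζ + ζ⁻¹⟯ ≤ F⟮ζ⟯ := adjoin_simple_le_iff.mpr <|
      add_mem (mem_adjoin_simple_self F ζ) (inv_mem (mem_adjoin_simple_self F ζ))
    have : FiniteDimensional F F⟮ζ⟯ :=
      adjoin.finiteDimensional (hζ.isIntegral (NeZero.pos _)).tower_top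
    exact ⟨hd, eq_of_le_of_finrank_eq hle
      (hd.trans (FiniteField.finrank_adjoin_primitiveRoot hζ).symm)⟩

/-- Let `ζ` be a primitive `p^s`-th root of unity over the finite field `F` of order
`q = 2^n` and `o = ord_{p^s}(q)`. If some power of `q` is `-1` mod `p^s` then
`[F(ζ+ζ⁻¹) : F] = o/2`; otherwise `[F(ζ+ζ⁻¹) : F] = o` and `F(ζ+ζ⁻¹) = F(ζ)`. -/
theorem degree_adjoin_zeta_add_zeta_inv (p n s : ℕ) (hp : p.Prime) (hpodd : Odd p)
    (hn : 1 ≤ n) (hs : 1 ≤ s)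
    (F K : Type*) [Field F] [Fintype F] [Field K] [Algebra F K]
    (q : ℕ) (hq : q = 2 ^ n) (hF : Fintype.card F = q)
    (ζ : K) (hζ : IsPrimitiveRoot ζ (p ^ s))
    (o : ℕ) (ho : o = orderOf ((q : ZMod (p ^ s)))) :
    ((∃ t : ℕ, (q : ZMod (p ^ s)) ^ t = -1) →
        Module.finrank F (IntermediateField.adjoin F {ζ + ζ⁻¹}) = o / 2) ∧
    ((¬ ∃ t : ℕ, (q : ZMod (p ^ s)) ^ t = -1) →
        Module.finrank F (IntermediateField.adjoin F {ζ + ζ⁻¹}) = o ∧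
          IntermediateField.adjoin F {ζ + ζ⁻¹} = IntermediateField.adjoin F {ζ}) :=
  degree_adjoin_zeta_add_zeta_inv_general p s hp hpodd hs F K q hF ζ hζ o ho
end

section
/- Let γ₁ = ζ^{p^{m-j}J₁} and γ₂ = ζ^{p^{m-j}J₂} (with gcd(J₁,p) = gcd(J₂,p) = 1) be roots of distinct irreducible factors of Φ_{p^j} over F. Then ζ^{p^{m-j-1}J₁} and ζ^{p^{m-j-1}J₂} are roots of distinct irreducible factors of Φ_{p^{j+1}} over F. -/
/-!
Elements with the same minimal polynomial `f` are both images of the root of `AdjoinRoot f`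
under embeddings, so their `p`-th powers again share a minimal polynomial. Since
`ζ^(p^(m-j) J) = (ζ^(p^(m-j-1) J))^p`, equal minimal polynomials at level `j + 1` would force
equal ones at level `j`.
-/

open Polynomial

namespace IsConjRoot

variable {K A : Type*} [Field K] [CommRing A] [IsDomain A] [Algebra K A] {x y : A}

theorem aeval (hx : IsIntegral K x) (h : IsConjRoot K x y) (q : K[X]) :
    IsConjRoot K (Polynomial.aeval x q) (Polynomial.aeval y q) := by
  have : Fact (Irreducible (minpoly K x)) := ⟨minpoly.irreducible hx⟩
  have embed (z : A) (hz : IsConjRoot K x z) :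
      minpoly K (Polynomial.aeval z q) = minpoly K (AdjoinRoot.mk (minpoly K x) q) :=
    let ι := AdjoinRoot.liftAlgHom (minpoly K x) (Algebra.ofId K A) z hz.aeval_eq_zero
    minpoly.algHom_eq ι ι.toRingHom.injective (AdjoinRoot.mk _ q)
  exact (embed x rfl).trans (embed y h).symm

theorem pow (h : IsConjRoot K x y) (k : ℕ) : IsConjRoot K (x ^ k) (y ^ k) := by
  by_cases hx : IsIntegral K x
  · simpa using h.aeval hx (X ^ k)
  rcases Nat.eq_zero_or_pos k with rfl | hk
  · simp [IsConjRoot.refl]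
  have hy : ¬IsIntegral K y := h.isIntegral_iff.not.mp hx
  rw [isConjRoot_def, minpoly.eq_zero (mt (IsIntegral.of_pow hk) hx),
    minpoly.eq_zero (mt (IsIntegral.of_pow hk) hy)]

end IsConjRoot

theorem lift_distinct_irreducible_factors_general (p m j : ℕ) (hjm : j < m)
    (F K : Type*) [Field F] [Field K] [Algebra F K] (ζ : K) (J₁ J₂ : ℕ)
    (hdist : minpoly F (ζ ^ (p ^ (m - j) * J₁)) ≠ minpoly F (ζ ^ (p ^ (m - j) * J₂))) :
    minpoly F (ζ ^ (p ^ (m - j - 1) * J₁)) ≠ minpoly F (ζ ^ (p ^ (m - j - 1) * J₂)) := by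
  have hsucc : p ^ (m - j) = p ^ (m - j - 1) * p := by
    rw [← pow_succ, Nat.sub_add_cancel (Nat.sub_pos_of_lt hjm)]
  have hexp : ∀ J, ζ ^ (p ^ (m - j) * J) = (ζ ^ (p ^ (m - j - 1) * J)) ^ p := fun J => by
    rw [hsucc, mul_right_comm, pow_mul]
  rw [hexp, hexp] at hdist
  exact fun h => hdist (IsConjRoot.pow h p)

/-- If `γ₁ = ζ^(p^(m-j) J₁)` and `γ₂ = ζ^(p^(m-j) J₂)` (with `J₁, J₂` coprime to `p`)
are roots of distinct irreducible factors of `Φ_{p^j}` over `F` (i.e. have distinct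
minimal polynomials), then `ζ^(p^(m-j-1) J₁)` and `ζ^(p^(m-j-1) J₂)` are roots of
distinct irreducible factors of `Φ_{p^(j+1)}` over `F`. -/
theorem lift_distinct_irreducible_factors (p n m j : ℕ) (hp : p.Prime) (hpodd : Odd p)
    (hn : 1 ≤ n) (hj : 1 ≤ j) (hjm : j < m)
    (F K : Type*) [Field F] [Fintype F] [Field K] [Algebra F K]
    (hF : Fintype.card F = 2 ^ n)
    (ζ : K) (hζ : IsPrimitiveRoot ζ (p ^ m))
    (J₁ J₂ : ℕ) (hJ₁ : Nat.Coprime J₁ p) (hJ₂ : Nat.Coprime J₂ p)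
    (hdist : minpoly F (ζ ^ (p ^ (m - j) * J₁)) ≠ minpoly F (ζ ^ (p ^ (m - j) * J₂))) :
    minpoly F (ζ ^ (p ^ (m - j - 1) * J₁)) ≠ minpoly F (ζ ^ (p ^ (m - j - 1) * J₂)) :=
  lift_distinct_irreducible_factors_general p m j hjm F K ζ J₁ J₂ hdist
end

section
/- In FD_{2p^m} with char F = 2, the product u_{ab,a}·u_{ab,a²}···u_{ab,a^{(p^m-1)/2}} equals ab(1 + Ĝ) and u_{b,a}·u_{b,a²}···u_{b,a^{(p^m-1)/2}} equals b(1 + Ĝ), where u_{a^j b, a^i} = 1 + (a^i + a^{-i})(1 + a^j b) and Ĝ = Σ_{g∈D_{2p^m}} g; consequently a = u_{ab,a}···u_{ab,a^{(p^m-1)/2}}·u_{b,a^{(p^m-1)/2}}···u_{b,a} lies in the group generated by the elements u_{a^jb,a^i}. -/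
open MonoidAlgebra

open MonoidAlgebra DihedralGroup Finset

section Aux

set_option linter.unusedSectionVars false

variable {n : ℕ} [NeZero n] {F : Type*} [Field F] [CharP F 2]

local notation "Φ" => MonoidAlgebra.of F (DihedralGroup n)

lemma aux_two_eq_zero (x : MonoidAlgebra F (DihedralGroup n)) : x + x = 0 := by
  have h2 : ((2 : ℕ) : F) = 0 := by exact_mod_cast (CharP.cast_eq_zero F 2)
  calc x + x = (2 : ℕ) • x := (two_nsmul x).symm
    _ = ((2 : ℕ) : F) • x := (Nat.cast_smul_eq_nsmul F 2 x).symm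
    _ = 0 := by rw [h2, zero_smul]

def auxEquiv (n : ℕ) : ZMod n ⊕ ZMod n ≃ DihedralGroup n where
  toFun := Sum.elim DihedralGroup.r DihedralGroup.sr
  invFun := fun x => match x with | .r j => Sum.inl j | .sr j => Sum.inr j
  left_inv := by rintro (x | x) <;> rfl
  right_inv := by rintro (x | x) <;> rfl

lemma aux_sum_univ (f : DihedralGroup n → MonoidAlgebra F (DihedralGroup n)) :
    ∑ g, f g = (∑ i : ZMod n, f (.r i)) + ∑ i : ZMod n, f (.sr i) := by
  rw [← Fintype.sum_equiv (auxEquiv n) (fun x => f (auxEquiv n x)) f (fun x => rfl),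
    Fintype.sum_sum_type]
  rfl

lemma aux_of_mul_sum (h : DihedralGroup n) :
    Φ h * (∑ g, Φ g) = ∑ g, Φ g := by
  rw [Finset.mul_sum]
  simp_rw [← map_mul]
  exact Fintype.sum_equiv (Equiv.mulLeft h) _ _ (fun g => rfl)

lemma aux_sum_mul_of (h : DihedralGroup n) :
    (∑ g, Φ g) * Φ h = ∑ g, Φ g := by
  rw [Finset.sum_mul]
  simp_rw [← map_mul]
  exact Fintype.sum_equiv (Equiv.mulRight h) _ _ (fun g => rfl)

lemma aux_Ghat_sq : (∑ g, Φ g) * (∑ g : DihedralGroup n, Φ g) = 0 := by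
  have hcongr : ∀ g ∈ (Finset.univ : Finset (DihedralGroup n)),
      Φ g * (∑ g, Φ g) = ∑ g, Φ g := fun g _ => aux_of_mul_sum g
  rw [Finset.sum_mul, Finset.sum_congr rfl hcongr, Finset.sum_const]
  rw [Finset.card_univ, DihedralGroup.card, ← Nat.cast_smul_eq_nsmul F,
    (CharP.cast_eq_zero_iff F 2 (2 * n)).2 ⟨n, rfl⟩, zero_smul]

lemma aux_Rhat_mul_sr (j : ZMod n) :
    (∑ i : ZMod n, Φ (.r i)) * Φ (.sr j) = ∑ i : ZMod n, Φ (.sr i) := by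
  rw [Finset.sum_mul]
  simp_rw [← map_mul, r_mul_sr]
  exact Fintype.sum_equiv (Equiv.subLeft j) _ _ (fun i => rfl)

lemma aux_prod {A : Type*} [Ring A] (E : A) (hE : E * E = 0)
    (X : ℕ → A) (hX : ∀ i, E * X i = X i * E) (L : List ℕ) :
    (L.map fun i => 1 + X i * E).prod = 1 + (L.map X).sum * E := by
  induction L with
  | nil => simp
  | cons a L ih =>
    have hS : E * (L.map X).sum = (L.map X).sum * E :=
      Commute.list_sum_right E _ (by
        intro x hx
        obtain ⟨i, _, rfl⟩ := List.mem_map.mp hx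
        exact hX i)
    have h0 : X a * E * ((L.map X).sum * E) = 0 := by
      rw [mul_assoc (X a) E _, ← mul_assoc E, hS, mul_assoc, hE, mul_zero, mul_zero]
    simp only [List.map_cons, List.prod_cons, List.sum_cons, ih]
    calc (1 + X a * E) * (1 + (L.map X).sum * E)
        = 1 + (L.map X).sum * E + X a * E + X a * E * ((L.map X).sum * E) := by noncomm_ring
      _ = 1 + (X a + (L.map X).sum) * E := by rw [h0, add_zero, add_mul]; abel

lemma aux_sum_zmod {A : Type*} [AddCommGroup A] (hodd : Odd n) (f : ZMod n → A) :
    ∑ t ∈ Finset.range ((n - 1) / 2),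
        (f ((t + 1 : ℕ) : ZMod n) + f (-((t + 1 : ℕ) : ZMod n)))
      = (∑ i : ZMod n, f i) - f 0 := by
  obtain ⟨k, hk⟩ : ∃ k, n = k + k + 1 := by
    obtain ⟨k, hk⟩ := hodd; exact ⟨k, by omega⟩
  have hk2 : (n - 1) / 2 = k := by omega
  have huniv : ∑ i : ZMod n, f i = ∑ t ∈ Finset.range n, f ((t : ℕ) : ZMod n) := by
    refine (Finset.sum_nbij' (fun t => ((t : ℕ) : ZMod n)) (fun x => x.val) ?_ ?_ ?_ ?_ ?_).symm
    · intro a _; exact Finset.mem_univ _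
    · intro x _; exact Finset.mem_range.mpr (ZMod.val_lt x)
    · intro a ha; exact ZMod.val_cast_of_lt (Finset.mem_range.mp ha)
    · intro x _; exact ZMod.natCast_rightInverse x
    · intro a _; rfl
  have key : ∀ g : ℕ → A, ∑ t ∈ Finset.range n, g t
      = g 0 + (∑ t ∈ Finset.range k, g (t + 1) + ∑ t ∈ Finset.range k, g (k + t + 1)) := by
    intro g
    rw [hk, Finset.sum_range_succ' g (k + k), Finset.sum_range_add]
    abel
  have h2 : ∑ t ∈ Finset.range k, f ((k + t + 1 : ℕ) : ZMod n)
      = ∑ t ∈ Finset.range k, f (-((t + 1 : ℕ) : ZMod n)) := by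
    rw [← Finset.sum_range_reflect (fun t => f ((k + t + 1 : ℕ) : ZMod n)) k]
    refine Finset.sum_congr rfl (fun j hj => ?_)
    have hj' := Finset.mem_range.mp hj
    congr 1
    have hz : ((k + (k - 1 - j) + 1 : ℕ) : ZMod n) + ((j + 1 : ℕ) : ZMod n) = 0 := by
      rw [← Nat.cast_add, show k + (k - 1 - j) + 1 + (j + 1) = n by omega, ZMod.natCast_self]
    exact eq_neg_of_add_eq_zero_left hz
  rw [hk2, Finset.sum_add_distrib, ← h2, huniv, key (fun t => f ((t : ℕ) : ZMod n))]
  simp only [Nat.cast_zero]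
  abel

end Aux

open MonoidAlgebra DihedralGroup Finset

section Aux2

variable {n : ℕ} [NeZero n] {F : Type*} [Field F] [CharP F 2]

local notation "Φ" => MonoidAlgebra.of F (DihedralGroup n)

lemma aux_refl (hodd : Odd n) (j : ZMod n) (L : List ℕ)
    (hperm : L.Perm (List.range ((n - 1) / 2))) :
    (L.map fun t => 1 +
        (Φ (.r ((t + 1 : ℕ) : ZMod n)) + Φ (.r (-((t + 1 : ℕ) : ZMod n)))) *
          (1 + Φ (.sr j))).prod
      = Φ (.sr j) * (1 + ∑ g, Φ g) := by
  have hss : Φ (DihedralGroup.sr j) * Φ (.sr j) = 1 := by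
    rw [← map_mul, sr_mul_sr, sub_self, ← DihedralGroup.one_def, map_one]
  have hE : (1 + Φ (.sr j)) * (1 + Φ (.sr j)) = 0 := by
    have hexp : (1 + Φ (.sr j)) * (1 + Φ (.sr j))
        = 1 + Φ (.sr j) * Φ (.sr j) + (Φ (.sr j) + Φ (.sr j)) := by noncomm_ring
    rw [hexp, hss, aux_two_eq_zero, zero_add, aux_two_eq_zero]
  have hX : ∀ t : ℕ, (1 + Φ (.sr j)) *
        (Φ (.r ((t + 1 : ℕ) : ZMod n)) + Φ (.r (-((t + 1 : ℕ) : ZMod n))))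
      = (Φ (.r ((t + 1 : ℕ) : ZMod n)) + Φ (.r (-((t + 1 : ℕ) : ZMod n)))) *
        (1 + Φ (.sr j)) := by
    intro t
    simp only [add_mul, mul_add, one_mul, mul_one, ← map_mul, sr_mul_r, r_mul_sr,
      sub_eq_add_neg, neg_neg]
    abel
  rw [aux_prod (1 + Φ (.sr j)) hE
    (fun t => Φ (.r ((t + 1 : ℕ) : ZMod n)) + Φ (.r (-((t + 1 : ℕ) : ZMod n)))) hX L]
  have hsum : (L.map (fun t => Φ (.r ((t + 1 : ℕ) : ZMod n))
        + Φ (.r (-((t + 1 : ℕ) : ZMod n))))).sum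
      = ∑ t ∈ Finset.range ((n - 1) / 2),
          (Φ (.r ((t + 1 : ℕ) : ZMod n)) + Φ (.r (-((t + 1 : ℕ) : ZMod n)))) := by
    rw [List.Perm.sum_eq (hperm.map _)]
    rfl
  rw [hsum, aux_sum_zmod hodd (fun i => Φ (.r i))]
  have hneg : ∀ x : MonoidAlgebra F (DihedralGroup n), -x = x :=
    fun x => neg_eq_of_add_eq_zero_left (aux_two_eq_zero x)
  have h0 : Φ (DihedralGroup.r (0 : ZMod n)) = 1 := by rw [← DihedralGroup.one_def, map_one]
  rw [sub_eq_add_neg, hneg, h0]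
  have hexp2 : (1 : MonoidAlgebra F (DihedralGroup n))
        + ((∑ i : ZMod n, Φ (.r i)) + 1) * (1 + Φ (.sr j))
      = 1 + 1 + ((∑ i : ZMod n, Φ (.r i))
          + (∑ i : ZMod n, Φ (.r i)) * Φ (.sr j) + Φ (.sr j)) := by noncomm_ring
  rw [hexp2, aux_two_eq_zero, zero_add, aux_Rhat_mul_sr j, mul_add, mul_one,
    aux_of_mul_sum, aux_sum_univ (fun g => Φ g)]
  abel

end Aux2

/-- In `F D_{2p^m}` with `char F = 2`, with `u_{a^j b, a^i} = 1 + (a^i + a^{-i})(1 + a^j b)`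
and `Ĝ = Σ_{g ∈ D_{2p^m}} g`, one has
`u_{ab,a} u_{ab,a²} ⋯ u_{ab,a^{(p^m-1)/2}} = ab(1 + Ĝ)` and
`u_{b,a} u_{b,a²} ⋯ u_{b,a^{(p^m-1)/2}} = b(1 + Ĝ)`; consequently
`a = u_{ab,a} ⋯ u_{ab,a^{(p^m-1)/2}} · u_{b,a^{(p^m-1)/2}} ⋯ u_{b,a}`, so `a` lies in the
group generated by the `u_{a^j b, a^i}`. -/
theorem prods_of_unitary_generators (p m : ℕ) (hp : p.Prime) (hpodd : Odd p)
    (hm : 1 ≤ m) [NeZero (p ^ m)]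
    (F : Type*) [Field F] [CharP F 2]
    (Ghat : MonoidAlgebra F (DihedralGroup (p ^ m)))
    (hGhat : Ghat = ∑ g : DihedralGroup (p ^ m), MonoidAlgebra.of F (DihedralGroup (p ^ m)) g)
    (u : ℕ → DihedralGroup (p ^ m) → MonoidAlgebra F (DihedralGroup (p ^ m)))
    (hu : ∀ i g, u i g = 1 +
      (MonoidAlgebra.of F (DihedralGroup (p ^ m)) (DihedralGroup.r (i : ZMod (p ^ m))) +
       MonoidAlgebra.of F (DihedralGroup (p ^ m)) (DihedralGroup.r (-(i : ZMod (p ^ m))))) *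
      (1 + MonoidAlgebra.of F (DihedralGroup (p ^ m)) g)) :
    (((List.range ((p ^ m - 1) / 2)).map
        (fun t => u (t + 1) (DihedralGroup.r 1 * DihedralGroup.sr 0))).prod =
      MonoidAlgebra.of F (DihedralGroup (p ^ m)) (DihedralGroup.r 1 * DihedralGroup.sr 0) *
        (1 + Ghat)) ∧
    (((List.range ((p ^ m - 1) / 2)).map (fun t => u (t + 1) (DihedralGroup.sr 0))).prod =
      MonoidAlgebra.of F (DihedralGroup (p ^ m)) (DihedralGroup.sr 0) * (1 + Ghat)) ∧
    (MonoidAlgebra.of F (DihedralGroup (p ^ m)) (DihedralGroup.r 1) =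
      (((List.range ((p ^ m - 1) / 2)).map
          (fun t => u (t + 1) (DihedralGroup.r 1 * DihedralGroup.sr 0))).prod) *
      ((((List.range ((p ^ m - 1) / 2)).map
          (fun t => u (t + 1) (DihedralGroup.sr 0))).reverse).prod)) := by
  have hodd : Odd (p ^ m) := hpodd.pow
  have key : ∀ (jz : ZMod (p ^ m)) (L : List ℕ),
      L.Perm (List.range ((p ^ m - 1) / 2)) →
      (L.map fun t => u (t + 1) (DihedralGroup.sr jz)).prod =
        MonoidAlgebra.of F (DihedralGroup (p ^ m)) (DihedralGroup.sr jz) * (1 + Ghat) := by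
    intro jz L hperm
    rw [hGhat]
    simp only [hu]
    exact aux_refl hodd jz L hperm
  have hab : (DihedralGroup.r 1 * DihedralGroup.sr 0 : DihedralGroup (p ^ m))
      = DihedralGroup.sr (0 - 1) := r_mul_sr 1 0
  have h1 : ((List.range ((p ^ m - 1) / 2)).map
        (fun t => u (t + 1) (DihedralGroup.r 1 * DihedralGroup.sr 0))).prod =
      MonoidAlgebra.of F (DihedralGroup (p ^ m)) (DihedralGroup.r 1 * DihedralGroup.sr 0) *
        (1 + Ghat) := by
    rw [hab]
    exact key (0 - 1) _ (List.Perm.refl _)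
  have h2 : ((List.range ((p ^ m - 1) / 2)).map
        (fun t => u (t + 1) (DihedralGroup.sr 0))).prod =
      MonoidAlgebra.of F (DihedralGroup (p ^ m)) (DihedralGroup.sr 0) * (1 + Ghat) :=
    key 0 _ (List.Perm.refl _)
  have h2r : (((List.range ((p ^ m - 1) / 2)).map
        (fun t => u (t + 1) (DihedralGroup.sr 0))).reverse).prod =
      MonoidAlgebra.of F (DihedralGroup (p ^ m)) (DihedralGroup.sr 0) * (1 + Ghat) := by
    rw [← List.map_reverse]
    exact key 0 _ (List.reverse_perm _)
  refine ⟨h1, h2, ?_⟩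
  rw [h1, h2r, hab, hGhat]
  have e1 : ((1 : MonoidAlgebra F (DihedralGroup (p ^ m)))
        + ∑ g, MonoidAlgebra.of F (DihedralGroup (p ^ m)) g) *
        MonoidAlgebra.of F (DihedralGroup (p ^ m)) (DihedralGroup.sr 0)
      = MonoidAlgebra.of F (DihedralGroup (p ^ m)) (DihedralGroup.sr 0)
        + ∑ g, MonoidAlgebra.of F (DihedralGroup (p ^ m)) g := by
    rw [add_mul, one_mul, aux_sum_mul_of]
  have e2 : (MonoidAlgebra.of F (DihedralGroup (p ^ m)) (DihedralGroup.sr 0)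
        + ∑ g, MonoidAlgebra.of F (DihedralGroup (p ^ m)) g) *
        (1 + ∑ g, MonoidAlgebra.of F (DihedralGroup (p ^ m)) g)
      = MonoidAlgebra.of F (DihedralGroup (p ^ m)) (DihedralGroup.sr 0) := by
    have hexp : (MonoidAlgebra.of F (DihedralGroup (p ^ m)) (DihedralGroup.sr 0)
          + ∑ g, MonoidAlgebra.of F (DihedralGroup (p ^ m)) g) *
          (1 + ∑ g, MonoidAlgebra.of F (DihedralGroup (p ^ m)) g)
        = MonoidAlgebra.of F (DihedralGroup (p ^ m)) (DihedralGroup.sr 0)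
          + (MonoidAlgebra.of F (DihedralGroup (p ^ m)) (DihedralGroup.sr 0) *
              ∑ g, MonoidAlgebra.of F (DihedralGroup (p ^ m)) g
            + ∑ g, MonoidAlgebra.of F (DihedralGroup (p ^ m)) g
            + (∑ g, MonoidAlgebra.of F (DihedralGroup (p ^ m)) g) *
              ∑ g, MonoidAlgebra.of F (DihedralGroup (p ^ m)) g) := by noncomm_ring
    rw [hexp, aux_of_mul_sum, aux_Ghat_sq, add_zero, aux_two_eq_zero, add_zero]
  calc MonoidAlgebra.of F (DihedralGroup (p ^ m)) (DihedralGroup.r 1)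
      = MonoidAlgebra.of F (DihedralGroup (p ^ m)) (DihedralGroup.sr (0 - 1)) *
        MonoidAlgebra.of F (DihedralGroup (p ^ m)) (DihedralGroup.sr 0) := by
        rw [← map_mul, sr_mul_sr, sub_sub_cancel]
    _ = MonoidAlgebra.of F (DihedralGroup (p ^ m)) (DihedralGroup.sr (0 - 1)) *
        ((MonoidAlgebra.of F (DihedralGroup (p ^ m)) (DihedralGroup.sr 0)
          + ∑ g, MonoidAlgebra.of F (DihedralGroup (p ^ m)) g) *
          (1 + ∑ g, MonoidAlgebra.of F (DihedralGroup (p ^ m)) g)) := by rw [e2]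
    _ = MonoidAlgebra.of F (DihedralGroup (p ^ m)) (DihedralGroup.sr (0 - 1)) *
        (((1 + ∑ g, MonoidAlgebra.of F (DihedralGroup (p ^ m)) g) *
          MonoidAlgebra.of F (DihedralGroup (p ^ m)) (DihedralGroup.sr 0)) *
          (1 + ∑ g, MonoidAlgebra.of F (DihedralGroup (p ^ m)) g)) := by rw [e1]
    _ = MonoidAlgebra.of F (DihedralGroup (p ^ m)) (DihedralGroup.sr (0 - 1)) *
        (1 + ∑ g, MonoidAlgebra.of F (DihedralGroup (p ^ m)) g) *
        (MonoidAlgebra.of F (DihedralGroup (p ^ m)) (DihedralGroup.sr 0) *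
          (1 + ∑ g, MonoidAlgebra.of F (DihedralGroup (p ^ m)) g)) := by
        rw [mul_assoc, mul_assoc]
end

section
/- The intersection of D_{2p^m} with the subgroup B(FD_{2p^m}) generated by the unitary units {1 + α^i(a^j+a^{-j})(1+a^k b)} equals ⟨a⟩; in particular b ∉ B(FD_{2p^m}). -/
/-!
Write `a = r 1`, `b = sr 0` and `N = p ^ m`. The sign `D_N → C₂`, trivial exactly on `⟨a⟩`,
induces `F D_N → F C₂`; in characteristic 2 it kills `a^j + a^{-j}`, so every generator of `B`
lies in the kernel and no reflection is in `B`.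

Conversely, with `ĝ = ∑ a^v`, the element `η = 1 + ĝ` equals
`∑_{j=1}^{(N-1)/2} (a^j + a^{-j})` and is idempotent because `N` is odd. Since `e = 1 + a^k b`
squares to zero and commutes with every `a^j + a^{-j}`, the generators with fixed `k` multiply to
`1 + η e`. Finally
`(1 + η (1 + b)) (1 + η (1 + a^{-t} b)) = 1 + η (1 + a^t) = a^t`, as `ĝ a^t = ĝ`.
-/

open MonoidAlgebra DihedralGroup Finset

instance MonoidAlgebra.charP {k G : Type*} [CommRing k] [Monoid G] (p : ℕ) [CharP k p] :
    CharP k[G] p :=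
  charP_of_injective_algebraMap' k p

section CharTwoRing

variable {R : Type*} [Ring R]

theorem mul_mul_mul_eq_zero_of_commute {a c e : R} (hce : Commute e c) (he : e * e = 0) :
    a * e * (c * e) = 0 := by
  rw [mul_assoc, ← mul_assoc e, hce.eq, mul_assoc, he, mul_zero, mul_zero]

theorem one_add_mul_mul_one_add_mul {a c e : R} (hce : Commute e c) (he : e * e = 0) :
    (1 + a * e) * (1 + c * e) = 1 + (a + c) * e := by
  calc (1 + a * e) * (1 + c * e) = 1 + (a + c) * e + a * e * (c * e) := by noncomm_ring
    _ = 1 + (a + c) * e := by rw [mul_mul_mul_eq_zero_of_commute hce he, add_zero]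

theorem Submonoid.one_add_sum_mul_mem {ι : Type*} (T : Submonoid R) (s : Finset ι) {c : ι → R}
    {e : R} (he : e * e = 0) (hce : ∀ i ∈ s, Commute e (c i))
    (hc : ∀ i ∈ s, 1 + c i * e ∈ T) :
    1 + (∑ i ∈ s, c i) * e ∈ T := by
  classical
  induction s using Finset.induction_on with
  | empty => simp [T.one_mem]
  | insert a s ha ih =>
    rw [sum_insert ha, add_comm (c a),
      ← one_add_mul_mul_one_add_mul (hce a (mem_insert_self a s)) he]
    exact T.mul_mem (ih (fun i hi => hce i (mem_insert_of_mem hi))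
      (fun i hi => hc i (mem_insert_of_mem hi))) (hc a (mem_insert_self a s))

variable [CharP R 2]

theorem CharTwo.one_add_mul_self (y : R) : (1 + y) * (1 + y) = 1 + y * y := by
  calc (1 + y) * (1 + y) = 1 + y * y + (y + y) := by noncomm_ring
    _ = 1 + y * y := by rw [CharTwo.add_self_eq_zero, add_zero]

theorem CharTwo.one_add_mul_one_add_mul_one_add_mul_one_add {η s s' : R}
    (hη : IsIdempotentElem η) (hs : Commute s η) :
    (1 + η * (1 + s)) * (1 + η * (1 + s')) = 1 + η * (1 + s * s') := by
  have hηs : η * (1 + s) * η = η * (1 + s) := by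
    rw [mul_assoc, ((Commute.one_left η).add_left hs).eq, ← mul_assoc, hη.eq]
  calc (1 + η * (1 + s)) * (1 + η * (1 + s'))
      = 1 + η * (1 + s) * η * (1 + s') + η * ((1 + s) + (1 + s')) := by noncomm_ring
    _ = 1 + η * (1 + s * s') + η * (2 * (1 + s + s')) := by rw [hηs]; noncomm_ring
    _ = 1 + η * (1 + s * s') := by rw [CharTwo.two_eq_zero, zero_mul, mul_zero, add_zero]

end CharTwoRing

theorem ZMod.sum_univ_eq_add_sum_range_add_neg {M : Type*} [AddCommMonoid M] (h : ℕ)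
    (f : ZMod (2 * h + 1) → M) :
    ∑ v, f v = f 0 + ∑ i ∈ range h, (f ↑(i + 1) + f (-↑(i + 1))) := by
  have hrange : ∑ v, f v = ∑ i ∈ range (h + 1 + h), f i := by
    rw [← Fin.sum_univ_eq_sum_range (fun i => f i), show h + 1 + h = 2 * h + 1 by ring]
    exact Fintype.sum_congr _ _ fun v => congrArg f (ZMod.natCast_zmod_val v).symm
  have hneg : ∀ i ∈ range h, f ↑(h + 1 + (h - 1 - i)) = f (-↑(i + 1)) := by
    intro i hi
    have hi := mem_range.mp hi
    congr 1
    rw [eq_neg_iff_add_eq_zero, ← Nat.cast_add,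
      show h + 1 + (h - 1 - i) + (i + 1) = 2 * h + 1 by omega, ZMod.natCast_self]
  rw [hrange, sum_range_add, sum_range_succ', ← sum_range_reflect (fun i => f ↑(h + 1 + i)),
    sum_congr rfl hneg, Nat.cast_zero, sum_add_distrib]
  abel

namespace DihedralGroup

variable {N : ℕ}

def sign : DihedralGroup N →* Multiplicative (ZMod 2) where
  toFun
    | r _ => 1
    | sr _ => Multiplicative.ofAdd 1
  map_one' := rfl
  map_mul' := by
    rintro (x | x) (y | y) <;> simp only [r_mul_r, r_mul_sr, sr_mul_r, sr_mul_sr] <;> decide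

@[simp]
theorem sign_r (x : ZMod N) : sign (r x) = 1 := rfl

@[simp]
theorem sign_sr (x : ZMod N) : sign (sr x) = Multiplicative.ofAdd 1 := rfl

theorem mem_zpowers_r_one_iff {g : DihedralGroup N} :
    g ∈ Subgroup.zpowers (r 1) ↔ ∃ t, r t = g := by
  simp only [Subgroup.mem_zpowers_iff, r_one_zpow]
  constructor
  · rintro ⟨k, rfl⟩
    exact ⟨_, rfl⟩
  · rintro ⟨t, rfl⟩
    exact ⟨ZMod.cast t, by rw [ZMod.intCast_zmod_cast]⟩

theorem ker_sign : (sign : DihedralGroup N →* _).ker = Subgroup.zpowers (r 1) := by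
  ext (x | x)
  · simp [mem_zpowers_r_one_iff]
  · simp only [MonoidHom.mem_ker, sign_sr, mem_zpowers_r_one_iff, reduceCtorEq, exists_false,
      iff_false]
    decide

end DihedralGroup

theorem MonoidAlgebra.apply_eq_one_of_val_eq_of_mem_ker {k G H : Type*} [CommSemiring k]
    [Nontrivial k] [Monoid G] [Monoid H] {φ : G →* H} {u : k[G]ˣ}
    (hu : u ∈ (Units.map (mapDomainAlgHom k k φ : k[G] →* k[H])).ker) {g : G}
    (hg : (u : k[G]) = of k G g) : φ g = 1 := by
  have hval := congrArg Units.val (MonoidHom.mem_ker.mp hu)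
  simp only [Units.coe_map, MonoidHom.coe_coe, hg, Units.val_one] at hval
  rw [← (of_injective (R := k)).eq_iff, map_one]
  simpa [mapDomainAlgHom] using hval

section RotationSum

variable (k : Type*) [CommRing k] (N : ℕ)

noncomputable def rotationSum [NeZero N] : k[DihedralGroup N] := ∑ v : ZMod N, of k _ (r v)

variable {k N}

theorem commute_one_add_of_sr_of_r_add_of_r_neg (x j : ZMod N) :
    Commute (1 + of k _ (sr x)) (of k _ (r j) + of k _ (r (-j))) := by
  refine (Commute.one_left _).add_left ?_
  simp only [Commute, SemiconjBy, mul_add, add_mul, ← map_mul, sr_mul_r, r_mul_sr, sub_eq_add_neg,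
    neg_neg]
  exact add_comm _ _

theorem one_add_of_sr_mul_self [CharP k 2] (x : ZMod N) :
    (1 + of k _ (sr x)) * (1 + of k _ (sr x)) = 0 := by
  rw [CharTwo.one_add_mul_self, ← map_mul, sr_mul_self, map_one, CharTwo.add_self_eq_zero]

variable [NeZero N]

theorem rotationSum_mul_of_r (t : ZMod N) : rotationSum k N * of k _ (r t) = rotationSum k N := by
  simp only [rotationSum, sum_mul, ← map_mul, r_mul_r]
  exact Fintype.sum_equiv (Equiv.addRight t) _ _ fun _ => rfl

theorem commute_of_sr_rotationSum (x : ZMod N) : Commute (of k _ (sr x)) (rotationSum k N) := by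
  simp only [Commute, SemiconjBy, rotationSum, mul_sum, sum_mul, ← map_mul, sr_mul_r, r_mul_sr]
  exact Fintype.sum_equiv ((Equiv.addLeft x).trans (Equiv.subLeft x).symm) _ _ fun v => by
    simp [Equiv.subLeft]

variable [CharP k 2]

theorem isIdempotentElem_rotationSum (hN : Odd N) : IsIdempotentElem (rotationSum k N) := by
  rw [IsIdempotentElem]
  nth_rewrite 2 [rotationSum]
  simp only [mul_sum, rotationSum_mul_of_r, sum_const, card_univ, ZMod.card, nsmul_eq_mul,
    natCast_eq_one_of_odd_of_two_eq_zero hN CharTwo.two_eq_zero, one_mul]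

theorem isIdempotentElem_one_add_rotationSum (hN : Odd N) :
    IsIdempotentElem (1 + rotationSum k N) := by
  rw [← CharTwo.sub_eq_add]
  exact (isIdempotentElem_rotationSum hN).one_sub

theorem one_add_rotationSum_eq_sum {h : ℕ} (hN : N = 2 * h + 1) :
    1 + rotationSum k N =
      ∑ i ∈ range h, (of k _ (r ↑(i + 1)) + of k _ (r (-↑(i + 1)))) := by
  subst hN
  rw [rotationSum, ZMod.sum_univ_eq_add_sum_range_add_neg, ← one_def, map_one,
    CharTwo.add_cancel_left]

theorem one_add_one_add_rotationSum_mul_one_add_of_r (t : ZMod N) :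
    1 + (1 + rotationSum k N) * (1 + of k _ (r t)) = of k _ (r t) := by
  calc 1 + (1 + rotationSum k N) * (1 + of k _ (r t))
      = (1 + 1) + of k _ (r t) + (rotationSum k N + rotationSum k N * of k _ (r t)) := by
        noncomm_ring
    _ = of k _ (r t) := by
      rw [rotationSum_mul_of_r, CharTwo.add_self_eq_zero, CharTwo.add_self_eq_zero, zero_add,
        add_zero]

end RotationSum

section UnitaryGenerators

variable {k : Type*} [CommRing k] {N : ℕ}

variable (k N) in
def unitaryGenerators (n : ℕ) (α : k) : Set k[DihedralGroup N]ˣ :=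
  {u | ∃ i j l : ℕ, i ≤ n - 1 ∧ 1 ≤ j ∧ j ≤ (N - 1) / 2 ∧ l ≤ N - 1 ∧
    (u : k[DihedralGroup N]) =
      1 + α ^ i • ((of k _ (r (j : ZMod N)) + of k _ (r (-(j : ZMod N)))) *
        (1 + of k _ (r (l : ZMod N) * sr 0)))}

variable [CharP k 2]

theorem closure_unitaryGenerators_le_ker_sign (n : ℕ) (α : k) :
    Subgroup.closure (unitaryGenerators k N n α) ≤
      (Units.map (mapDomainAlgHom k k (sign (N := N)) :
        k[DihedralGroup N] →* k[Multiplicative (ZMod 2)])).ker := by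
  rw [Subgroup.closure_le]
  rintro u ⟨i, j, l, -, -, -, -, hu⟩
  have hr (x : ZMod N) : mapDomainAlgHom k k sign (of k _ (r x)) = 1 := by
    simp [mapDomainAlgHom]; rfl
  rw [SetLike.mem_coe, MonoidHom.mem_ker, Units.ext_iff, Units.coe_map, MonoidHom.coe_coe, hu,
    map_add, map_one, map_smul, map_mul, map_add, hr, hr, CharTwo.add_self_eq_zero, zero_mul,
    smul_zero, add_zero, Units.val_one]

theorem exists_mem_unitaryGenerators_val_eq [NeZero N] (n : ℕ) (α : k) {j : ℕ} (hj : 1 ≤ j)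
    (hjN : j ≤ (N - 1) / 2) (x : ZMod N) :
    ∃ u ∈ unitaryGenerators k N n α,
      (u : k[DihedralGroup N]) =
        1 + (of k _ (r (j : ZMod N)) + of k _ (r (-(j : ZMod N)))) * (1 + of k _ (sr x)) := by
  have hsq := mul_mul_mul_eq_zero_of_commute
    (a := of k _ (r (j : ZMod N)) + of k _ (r (-(j : ZMod N))))
    (commute_one_add_of_sr_of_r_add_of_r_neg x (j : ZMod N)) (one_add_of_sr_mul_self x)
  refine ⟨(IsNilpotent.isUnit_one_add ⟨2, by rw [pow_two]; exact hsq⟩).unit,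
    ⟨0, j, (-x).val, Nat.zero_le _, hj, hjN, ?_, ?_⟩, IsUnit.unit_spec _⟩
  · have := ZMod.val_lt (-x)
    omega
  · rw [IsUnit.unit_spec, pow_zero, one_smul, r_mul_sr, ZMod.natCast_zmod_val, zero_sub, neg_neg]

theorem exists_mem_closure_unitaryGenerators_val_eq_of_r [NeZero N] (hN : Odd N) (n : ℕ) (α : k)
    (t : ZMod N) :
    ∃ u ∈ Subgroup.closure (unitaryGenerators k N n α),
      (u : k[DihedralGroup N]) = of k _ (r t) := by
  obtain ⟨h, hh⟩ := hN
  set T := (Subgroup.closure (unitaryGenerators k N n α)).toSubmonoid.map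
    (Units.coeHom k[DihedralGroup N])
  suffices of k _ (r t) ∈ T by simpa [T] using this
  have hgen (x : ZMod N) : 1 + (1 + rotationSum k N) * (1 + of k _ (sr x)) ∈ T := by
    rw [one_add_rotationSum_eq_sum hh]
    refine T.one_add_sum_mul_mem _ (one_add_of_sr_mul_self x)
      (fun _ _ => commute_one_add_of_sr_of_r_add_of_r_neg x _) fun i hi => ?_
    have := mem_range.mp hi
    obtain ⟨u, hu, hval⟩ :=
      exists_mem_unitaryGenerators_val_eq n α (j := i + 1) (by omega) (by omega) x
    exact ⟨u, Subgroup.subset_closure hu, hval⟩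
  have hst : of k _ (sr 0) * of k _ (sr t) = of k (DihedralGroup N) (r t) := by
    rw [← map_mul, sr_mul_sr, sub_zero]
  rw [← one_add_one_add_rotationSum_mul_one_add_of_r, ← hst,
    ← CharTwo.one_add_mul_one_add_mul_one_add_mul_one_add
      (isIdempotentElem_one_add_rotationSum ⟨h, hh⟩)
      ((Commute.one_right _).add_right (commute_of_sr_rotationSum 0))]
  exact T.mul_mem (hgen 0) (hgen t)

end UnitaryGenerators

theorem dihedral_inter_B_eq_powers_a_general (p n m : ℕ) (hpodd : Odd p)
    [NeZero (p ^ m)]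
    (F : Type*) [Field F] [CharP F 2]
    (α : F)
    (BSet : Set (MonoidAlgebra F (DihedralGroup (p ^ m)))ˣ)
    (hBSet : BSet = {u : (MonoidAlgebra F (DihedralGroup (p ^ m)))ˣ | ∃ i j k : ℕ, i ≤ n - 1 ∧ 1 ≤ j ∧ j ≤ (p ^ m - 1) / 2 ∧
      k ≤ p ^ m - 1 ∧
      (u : MonoidAlgebra F (DihedralGroup (p ^ m))) = 1 + α ^ i •
        ((MonoidAlgebra.of F (DihedralGroup (p ^ m)) (DihedralGroup.r (j : ZMod (p ^ m))) +
          MonoidAlgebra.of F (DihedralGroup (p ^ m)) (DihedralGroup.r (-(j : ZMod (p ^ m))))) *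
         (1 + MonoidAlgebra.of F (DihedralGroup (p ^ m))
            (DihedralGroup.r (k : ZMod (p ^ m)) * DihedralGroup.sr 0)))}) :
    ∀ g : DihedralGroup (p ^ m),
      (∃ u ∈ Subgroup.closure BSet,
        (u : MonoidAlgebra F (DihedralGroup (p ^ m))) =
          MonoidAlgebra.of F (DihedralGroup (p ^ m)) g) ↔
      g ∈ Subgroup.zpowers (DihedralGroup.r (1 : ZMod (p ^ m))) := by
  subst hBSet
  intro g
  constructor
  · rintro ⟨u, hu, hug⟩
    rw [← ker_sign]
    exact apply_eq_one_of_val_eq_of_mem_ker (closure_unitaryGenerators_le_ker_sign n α hu) hug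
  · intro hg
    obtain ⟨t, rfl⟩ := mem_zpowers_r_one_iff.mp hg
    exact exists_mem_closure_unitaryGenerators_val_eq_of_r hpodd.pow n α t

/-- The intersection of `D_{2p^m}` with the subgroup `B(F D_{2p^m})` of `U(F D_{2p^m})`
generated by the unitary units `{1 + α^i(a^j + a^{-j})(1 + a^k b)}` equals `⟨a⟩`;
in particular `b ∉ B(F D_{2p^m})`. -/
theorem dihedral_inter_B_eq_powers_a (p n m : ℕ) (hp : p.Prime) (hpodd : Odd p)
    (hn : 1 ≤ n) (hm : 1 ≤ m) [NeZero (p ^ m)]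
    (F : Type*) [Field F] [Fintype F] [CharP F 2] (hF : Fintype.card F = 2 ^ n)
    (α : F) (hα : Subring.closure ({α} : Set F) = ⊤)
    (BSet : Set (MonoidAlgebra F (DihedralGroup (p ^ m)))ˣ)
    (hBSet : BSet = {u : (MonoidAlgebra F (DihedralGroup (p ^ m)))ˣ | ∃ i j k : ℕ, i ≤ n - 1 ∧ 1 ≤ j ∧ j ≤ (p ^ m - 1) / 2 ∧
      k ≤ p ^ m - 1 ∧
      (u : MonoidAlgebra F (DihedralGroup (p ^ m))) = 1 + α ^ i •
        ((MonoidAlgebra.of F (DihedralGroup (p ^ m)) (DihedralGroup.r (j : ZMod (p ^ m))) +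
          MonoidAlgebra.of F (DihedralGroup (p ^ m)) (DihedralGroup.r (-(j : ZMod (p ^ m))))) *
         (1 + MonoidAlgebra.of F (DihedralGroup (p ^ m))
            (DihedralGroup.r (k : ZMod (p ^ m)) * DihedralGroup.sr 0)))}) :
    ∀ g : DihedralGroup (p ^ m),
      (∃ u ∈ Subgroup.closure BSet,
        (u : MonoidAlgebra F (DihedralGroup (p ^ m))) =
          MonoidAlgebra.of F (DihedralGroup (p ^ m)) g) ↔
      g ∈ Subgroup.zpowers (DihedralGroup.r (1 : ZMod (p ^ m))) :=
  dihedral_inter_B_eq_powers_a_general p n m hpodd F α BSet hBSet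
end
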